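/- arXiv:2302.04976 — 3 statements merged into one kernel-verified Lean document; each statement's English description precedes it below -/
import Mathlib

section
/- Let Φ be a reduced root system with positive roots Φ⁺. If Ψ ⊆ Φ is a closed subset (i.e., α, β ∈ Ψ and α+β ∈ Φ imply α+β ∈ Ψ) that is radical (i.e., Ψ ∩ (−Ψ) = ∅), then there exists an element w of the Weyl group such that Ψ ⊆ w(Φ⁺). -/
set_option linter.unusedSectionVars false
set_option maxHeartbeats 1000000

open scoped RealInnerProductSpace
noncomputable section

attribute [local instance] Classical.propDecidable

variable {V : Type*} [NormedAddCommGroup V] [InnerProductSpace ℝ V] [FiniteDimensional ℝ V]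

/-- A (reduced, crystallographic) root system realized in a real inner product space:
finite, roots nonzero, closed under the reflections `s_α`, crystallographic, and reduced. -/
structure IsRootSystem (Φ : Set V) : Prop where
  finite : Φ.Finite
  ne_zero : ∀ α ∈ Φ, α ≠ 0
  reflect_mem : ∀ α ∈ Φ, ∀ β ∈ Φ, β - (2 * ⟪α, β⟫ / ⟪α, α⟫) • α ∈ Φ
  crystallographic : ∀ α ∈ Φ, ∀ β ∈ Φ, ∃ n : ℤ, 2 * ⟪α, β⟫ / ⟪α, α⟫ = (n : ℝ)
  reduced : ∀ α ∈ Φ, ∀ t : ℝ, t • α ∈ Φ → t = 1 ∨ t = -1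

/-- A choice of positive roots `Φp` for the root system `Φ`. -/
structure IsPositiveSystem (Φ Φp : Set V) : Prop where
  subset : Φp ⊆ Φ
  neg_xor : ∀ α ∈ Φ, (α ∈ Φp ↔ -α ∉ Φp)
  add_mem : ∀ α ∈ Φp, ∀ β ∈ Φp, α + β ∈ Φ → α + β ∈ Φp

/-- `Δ` is the set of simple roots of the positive system `Φp`: every positive root is a
sum of simple roots through a sequence of partial sums all of which are positive roots. -/
structure IsBase (Φ Φp Δ : Set V) : Prop where
  subset : Δ ⊆ Φp
  gen : ∀ α ∈ Φp, ∃ l : List V, l ≠ [] ∧ (∀ β ∈ l, β ∈ Δ) ∧ l.sum = α ∧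
    ∀ n, n < l.length → (l.take (n + 1)).sum ∈ Φp

/-- The orthogonal reflection `s_α` in the hyperplane orthogonal to `α`. -/
def sRefl (α : V) : V ≃ₗᵢ[ℝ] V := Submodule.reflection (Submodule.span ℝ {α})ᗮ

/-- The Weyl group `W₀`: the group generated by the reflections in the roots. -/
def weylGroup (Φ : Set V) : Subgroup (V ≃ₗᵢ[ℝ] V) :=
  Subgroup.closure {w | ∃ α ∈ Φ, w = sRefl α}

/-- The coroot `α^∨ = 2α/⟨α,α⟩`. -/
def coro (α : V) : V := (2 / ⟪α, α⟫) • α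

/-- The length of a Weyl group element, as the number of inversions:
`ℓ(w) = #{α ∈ Φ⁺ : wα ∈ Φ⁻}`. -/
def len (Φp : Set V) (w : V ≃ₗᵢ[ℝ] V) : ℕ := {α ∈ Φp | w α ∉ Φp}.ncard

/-- The set `W_x = {r ∈ W₀ : r(Φ⁺ \ Φ_x) ⊆ Φ⁺}`. -/
def Wx (Φ Φp Φx : Set V) : Set (V ≃ₗᵢ[ℝ] V) :=
  {r | r ∈ weylGroup Φ ∧ ∀ β ∈ Φp \ Φx, r β ∈ Φp}

/-- Irreducibility: the set cannot be split into two nonempty mutually orthogonal parts. -/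
def RootIsIrreducible (Φ : Set V) : Prop :=
  Φ.Nonempty ∧ ∀ s t : Set V, Φ = s ∪ t → (∀ a ∈ s, ∀ b ∈ t, ⟪a, b⟫ = 0) →
    s = ∅ ∨ t = ∅

/-- The `k`-value `k(a, t^μ w) = ⟨a, μ⟩ + δ_{w⁻¹a}` of the alcove `t^μ w` with respect to
the root `a`, where `δ_β = 0` if `β` is positive and `-1` otherwise. -/
def kval (Φp : Set V) (a μ : V) (w : V ≃ₗᵢ[ℝ] V) : ℝ :=
  ⟪a, μ⟫ + (if w.symm a ∈ Φp then 0 else -1)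

/-! ### Auxiliary lemmas -/

lemma inner_self_pos' {x : V} (hx : x ≠ 0) : (0:ℝ) < ⟪x, x⟫ := by
  rw [real_inner_self_eq_norm_sq]
  have : 0 < ‖x‖ := norm_pos_iff.mpr hx
  positivity

lemma sRefl_apply (α x : V) : sRefl α x = x - (2 * ⟪α, x⟫ / ⟪α, α⟫) • α := by
  show Submodule.reflection ((ℝ ∙ α))ᗮ x = x - (2 * ⟪α, x⟫ / ⟪α, α⟫) • α
  rw [Submodule.reflection_orthogonal_apply, Submodule.reflection_singleton_apply, real_inner_self_eq_norm_sq]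
  simp only [RCLike.ofReal_real_eq_id, id_eq]
  match_scalars <;> ring

lemma sRefl_symm (α : V) : (sRefl α).symm = sRefl α := Submodule.reflection_symm

/-- If two roots have negative inner product and are not opposite, their sum is a root. -/
lemma root_add {Φ : Set V} (hΦ : IsRootSystem Φ) {α β : V} (hα : α ∈ Φ) (hβ : β ∈ Φ)
    (hne : β ≠ -α) (hneg : ⟪α, β⟫ < 0) : α + β ∈ Φ := by
  have hα0 := hΦ.ne_zero α hα
  have hβ0 := hΦ.ne_zero β hβ
  have hαα : (0:ℝ) < ⟪α, α⟫ := inner_self_pos' hα0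
  have hββ : (0:ℝ) < ⟪β, β⟫ := inner_self_pos' hβ0
  by_cases hdep : ∃ t : ℝ, β = t • α
  · obtain ⟨t, rfl⟩ := hdep
    have ht : ⟪α, t • α⟫ = t * ⟪α, α⟫ := real_inner_smul_right α α t
    have htneg : t < 0 := by
      by_contra h
      push_neg at h
      nlinarith [hneg, ht]
    rcases hΦ.reduced α hα t hβ with h1 | h1
    · exact absurd h1 (by linarith)
    · exact absurd (by rw [h1]; exact neg_one_smul ℝ α) hne
  · -- linearly independent case : strict Cauchy-Schwarz
    have key : ⟪α, β⟫ ^ 2 < ⟪α, α⟫ * ⟪β, β⟫ := by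
      set c : ℝ := ⟪α, β⟫ / ⟪α, α⟫ with hc
      have hγ : β - c • α ≠ 0 := by
        intro h
        exact hdep ⟨c, by rw [← sub_eq_zero]; exact h⟩
      have h2 : 0 < ⟪β - c • α, β - c • α⟫ := inner_self_pos' hγ
      have e1 : ⟪β - c • α, β - c • α⟫
          = ⟪β, β⟫ - 2 * c * ⟪α, β⟫ + c ^ 2 * ⟪α, α⟫ := by
        simp only [inner_sub_left, inner_sub_right, real_inner_smul_left,
          real_inner_smul_right, real_inner_comm α β]
        ring
      rw [e1, hc] at h2
      have hne' : ⟪α, α⟫ ≠ 0 := ne_of_gt hαα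
      have hx : (⟪β, β⟫ - 2 * (⟪α, β⟫ / ⟪α, α⟫) * ⟪α, β⟫ + (⟪α, β⟫ / ⟪α, α⟫) ^ 2 * ⟪α, α⟫)
          * ⟪α, α⟫ = ⟪α, α⟫ * ⟪β, β⟫ - ⟪α, β⟫ ^ 2 := by
        field_simp
        ring
      nlinarith [mul_pos h2 hαα]
    obtain ⟨n, hn⟩ := hΦ.crystallographic α hα β hβ
    obtain ⟨m, hm⟩ := hΦ.crystallographic β hβ α hα
    have hβα : ⟪β, α⟫ = ⟪α, β⟫ := real_inner_comm α β
    have hnneg : (n : ℝ) < 0 := by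
      rw [← hn]
      apply div_neg_of_neg_of_pos (by linarith) hαα
    have hmneg : (m : ℝ) < 0 := by
      rw [← hm, hβα]
      apply div_neg_of_neg_of_pos (by linarith) hββ
    have hn0 : n < 0 := by exact_mod_cast hnneg
    have hm0 : m < 0 := by exact_mod_cast hmneg
    have hprod : (n : ℝ) * (m : ℝ) < 4 := by
      rw [← hn, ← hm, hβα]
      have hαα' : ⟪α, α⟫ ≠ 0 := ne_of_gt hαα
      have hββ' : ⟪β, β⟫ ≠ 0 := ne_of_gt hββ
      rw [div_mul_div_comm]
      rw [div_lt_iff₀ (by positivity)]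
      nlinarith [key]
    have hprodZ : n * m < 4 := by exact_mod_cast hprod
    have hcase : n = -1 ∨ m = -1 := by
      by_contra h
      push_neg at h
      have hn2 : n ≤ -2 := by omega
      have hm2 : m ≤ -2 := by omega
      nlinarith [hn2, hm2]
    rcases hcase with h | h
    · have := hΦ.reflect_mem α hα β hβ
      rw [hn, h] at this
      push_cast at this
      rw [neg_one_smul, sub_neg_eq_add] at this
      rwa [add_comm]
    · have := hΦ.reflect_mem β hβ α hα
      rw [hm, h] at this
      push_cast at this
      rw [neg_one_smul, sub_neg_eq_add] at this
      exact this

/-- Roots are closed under negation. -/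
lemma root_neg {Φ : Set V} (hΦ : IsRootSystem Φ) {α : V} (hα : α ∈ Φ) : -α ∈ Φ := by
  have h := hΦ.reflect_mem α hα α hα
  have hαα : ⟪α, α⟫ ≠ 0 := ne_of_gt (inner_self_pos' (hΦ.ne_zero α hα))
  have h2 : 2 * ⟪α, α⟫ / ⟪α, α⟫ = (2:ℝ) := by field_simp
  rw [h2] at h
  have e : α - (2:ℝ) • α = -α := by module
  rwa [e] at h

/-- No nonempty multiset of elements of a "pair-closed" subset of roots sums to zero. -/
lemma no_zero_sum_multiset {Φ S : Set V} (hΦ : IsRootSystem Φ) (hS : S ⊆ Φ)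
    (hcl : ∀ a ∈ S, ∀ b ∈ S, ⟪a, b⟫ < 0 → a + b ∈ S) :
    ∀ n (M : Multiset V), M.card ≤ n → (∀ a ∈ M, a ∈ S) → M ≠ 0 → M.sum = 0 → False := by
  intro n
  induction n with
  | zero =>
    intro M h hmem hne _
    exact hne (Multiset.card_eq_zero.mp (Nat.le_zero.mp h))
  | succ n ih =>
    intro M hcard hmem hne hsum
    obtain ⟨a₁, ha₁⟩ := Multiset.exists_mem_of_ne_zero hne
    have hM : a₁ ::ₘ M.erase a₁ = M := Multiset.cons_erase ha₁
    have hsum1 : a₁ + (M.erase a₁).sum = 0 := by rw [← Multiset.sum_cons, hM]; exact hsum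
    have ha₁S := hmem a₁ ha₁
    have ha₁0 : a₁ ≠ 0 := hΦ.ne_zero a₁ (hS ha₁S)
    by_cases hM₁0 : M.erase a₁ = 0
    · rw [hM₁0, Multiset.sum_zero, add_zero] at hsum1
      exact ha₁0 hsum1
    have hsumval : (M.erase a₁).sum = -a₁ := eq_neg_of_add_eq_zero_right hsum1
    have hinner : ⟪a₁, (M.erase a₁).sum⟫ < 0 := by
      rw [hsumval, inner_neg_right]
      simpa using inner_self_pos' ha₁0
    have hexists : ∃ aj ∈ M.erase a₁, ⟪a₁, aj⟫ < 0 := by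
      by_contra h
      push_neg at h
      have hmap : ⟪a₁, (M.erase a₁).sum⟫ = ((M.erase a₁).map (fun x => ⟪a₁, x⟫)).sum := by
        have := map_multiset_sum ((innerₛₗ ℝ a₁ : V →ₗ[ℝ] ℝ).toAddMonoidHom) (M.erase a₁)
        simpa using this
      have hge : (0:ℝ) ≤ ⟪a₁, (M.erase a₁).sum⟫ := by
        rw [hmap]
        apply Multiset.sum_nonneg
        intro x hx
        obtain ⟨y, hy, rfl⟩ := Multiset.mem_map.mp hx
        exact h y hy
      linarith
    obtain ⟨aj, hajM, haj⟩ := hexists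
    have hajS := hmem aj (Multiset.mem_of_mem_erase hajM)
    have hb : a₁ + aj ∈ S := hcl _ ha₁S _ hajS haj
    refine ih ((a₁ + aj) ::ₘ (M.erase a₁).erase aj) ?_ ?_ (Multiset.cons_ne_zero) ?_
    · have h1 : (M.erase a₁).card + 1 = M.card := by
        rw [← Multiset.card_cons a₁ (M.erase a₁), hM]
      have h2 : ((M.erase a₁).erase aj).card = (M.erase a₁).card - 1 :=
        Multiset.card_erase_of_mem hajM
      have h3 : 0 < (M.erase a₁).card := Multiset.card_pos.mpr hM₁0
      have h4 : ((a₁ + aj) ::ₘ (M.erase a₁).erase aj).card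
          = ((M.erase a₁).erase aj).card + 1 := Multiset.card_cons _ _
      omega
    · intro x hx
      rcases Multiset.mem_cons.mp hx with h | h
      · rw [h]; exact hb
      · exact hmem x (Multiset.mem_of_mem_erase (Multiset.mem_of_mem_erase h))
    · have herase : aj ::ₘ (M.erase a₁).erase aj = M.erase a₁ := Multiset.cons_erase hajM
      have hsume : aj + ((M.erase a₁).erase aj).sum = (M.erase a₁).sum := by
        rw [← Multiset.sum_cons, herase]
      rw [Multiset.sum_cons]
      have h5 : a₁ + aj + ((M.erase a₁).erase aj).sum
          = a₁ + (aj + ((M.erase a₁).erase aj).sum) := by abel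
      rw [h5, hsume, hsum1]

/-- No positive linear combination of elements of a pair-closed subset of roots is zero. -/
lemma no_pos_rel {Φ S : Set V} (hΦ : IsRootSystem Φ) (hS : S ⊆ Φ)
    (hcl : ∀ a ∈ S, ∀ b ∈ S, ⟪a, b⟫ < 0 → a + b ∈ S) :
    ∀ n (t : Finset V), t.card ≤ n → t.Nonempty → ↑t ⊆ S → ∀ c : V → ℝ,
      (∀ a ∈ t, 0 < c a) → (∑ a ∈ t, c a • a) = 0 → False := by
  intro n
  induction n with
  | zero =>
    intro t hcard htne _ _ _ _
    have := Finset.card_pos.mpr htne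
    omega
  | succ n ih =>
    intro t hcard htne htS c hc hrel
    obtain ⟨a₀, ha₀⟩ := htne
    have ha₀S : a₀ ∈ S := htS ha₀
    have ha₀0 : a₀ ≠ 0 := hΦ.ne_zero a₀ (hS ha₀S)
    by_cases hli : LinearIndependent ℝ (fun a : {x // x ∈ t.erase a₀} => (a : V))
    · -- linearly independent case: derive a rational, then integral relation
      by_cases ht'0 : t.erase a₀ = ∅
      · have hteq : t = {a₀} := by
          apply Finset.eq_singleton_iff_unique_mem.mpr
          refine ⟨ha₀, fun x hx => ?_⟩
          by_contra hne
          exact (Finset.notMem_empty x) (ht'0 ▸ Finset.mem_erase.mpr ⟨hne, hx⟩)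
        rw [hteq, Finset.sum_singleton] at hrel
        have := hc a₀ ha₀
        exact ha₀0 (by simpa [smul_eq_zero, ne_of_gt this] using hrel)
      have hc₀ : 0 < c a₀ := hc a₀ ha₀
      have htsub : ∀ a : {x // x ∈ t.erase a₀}, (a : V) ∈ Φ :=
        fun a => hS (htS (Finset.mem_of_mem_erase a.2))
      have hin : ∀ b a : V, b ∈ Φ → a ∈ Φ → ∃ z : ℤ, 2 * ⟪b, a⟫ / ⟪b, b⟫ = (z : ℝ) :=
        fun b a hb ha => hΦ.crystallographic b hb a ha
      set pr : V → V → ℤ := fun b a =>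
        if h : b ∈ Φ ∧ a ∈ Φ then (hin b a h.1 h.2).choose else 0 with hprdef
      have hpr : ∀ b a : V, b ∈ Φ → a ∈ Φ → ((pr b a : ℝ)) = 2 * ⟪b, a⟫ / ⟪b, b⟫ := by
        intro b a hb ha
        rw [hprdef]
        simp only [hb, ha, and_self, dif_pos]
        exact ((hin b a hb ha).choose_spec).symm
      set Nq : Matrix {x // x ∈ t.erase a₀} {x // x ∈ t.erase a₀} ℚ :=
        fun b a => ((pr (b:V) (a:V) : ℚ)) with hNqdef
      set dq : {x // x ∈ t.erase a₀} → ℚ := fun b => -((pr (b:V) a₀ : ℚ)) with hdqdef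
      set Nr : Matrix {x // x ∈ t.erase a₀} {x // x ∈ t.erase a₀} ℝ :=
        Nq.map (Rat.cast) with hNrdef
      set xs : {x // x ∈ t.erase a₀} → ℝ := fun a => c (a : V) / c a₀ with hxsdef
      have ha₀Φ : a₀ ∈ Φ := hS ha₀S
      -- the true solution solves the system
      have hrow : ∀ b : {x // x ∈ t.erase a₀}, Nr.mulVec xs b = ((dq b : ℝ)) := by
        intro b
        have hbΦ := htsub b
        have hbb : (0:ℝ) < ⟪(b:V), (b:V)⟫ := inner_self_pos' (hΦ.ne_zero _ hbΦ)
        have hpair : ∑ a ∈ t, c a * ⟪(b:V), a⟫ = 0 := by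
          have h0 : ⟪(b:V), ∑ a ∈ t, c a • a⟫ = 0 := by rw [hrel, inner_zero_right]
          rw [inner_sum] at h0
          simpa [real_inner_smul_right] using h0
        have hsplit := Finset.add_sum_erase t (fun a => c a * ⟪(b:V), a⟫) ha₀
        rw [hpair] at hsplit
        beta_reduce at hsplit
        have hsum' : ∑ a ∈ t.erase a₀, c a * ⟪(b:V), a⟫ = - (c a₀ * ⟪(b:V), a₀⟫) := by
          linarith
        have hattach : ∑ a : {x // x ∈ t.erase a₀}, c (a:V) * ⟪(b:V), (a:V)⟫
            = - (c a₀ * ⟪(b:V), a₀⟫) := by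
          rw [← hsum']
          exact Finset.sum_coe_sort (t.erase a₀) (fun a => c a * ⟪(b:V), a⟫)
        show (∑ a, Nr b a * xs a) = _
        have hterm : ∀ a : {x // x ∈ t.erase a₀}, Nr b a * xs a
            = (2 / (⟪(b:V), (b:V)⟫ * c a₀)) * (c (a:V) * ⟪(b:V), (a:V)⟫) := by
          intro a
          show ((Nq b a : ℝ)) * xs a = _
          rw [hNqdef]
          push_cast
          rw [hpr _ _ hbΦ (htsub a), hxsdef]
          field_simp
        rw [Finset.sum_congr rfl (fun a _ => hterm a), ← Finset.mul_sum, hattach]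
        rw [hdqdef]
        push_cast
        rw [hpr _ _ hbΦ ha₀Φ]
        field_simp
      -- injectivity of the matrix
      have hker : ∀ x : {y // y ∈ t.erase a₀} → ℝ, Nr.mulVec x = 0 → x = 0 := by
        intro x hx
        set y : V := ∑ a : {y // y ∈ t.erase a₀}, x a • (a : V) with hydef
        have hby : ∀ b : {y // y ∈ t.erase a₀}, ⟪(b:V), y⟫ = 0 := by
          intro b
          have hbΦ := htsub b
          have hbb : (0:ℝ) < ⟪(b:V), (b:V)⟫ := inner_self_pos' (hΦ.ne_zero _ hbΦ)
          have h0 : (∑ a, Nr b a * x a) = 0 := congrFun hx b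
          have hterm : ∀ a : {y // y ∈ t.erase a₀}, Nr b a * x a
              = (2 / ⟪(b:V), (b:V)⟫) * (x a * ⟪(b:V), (a:V)⟫) := by
            intro a
            show ((Nq b a : ℝ)) * x a = _
            rw [hNqdef]
            push_cast
            rw [hpr _ _ hbΦ (htsub a)]
            field_simp
          rw [Finset.sum_congr rfl (fun a _ => hterm a), ← Finset.mul_sum] at h0
          have h2 : (∑ a, x a * ⟪(b:V), (a:V)⟫) = 0 := by
            rcases mul_eq_zero.mp h0 with h | h
            · exact absurd h (by positivity)
            · exact h
          rw [hydef, inner_sum]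
          simpa [real_inner_smul_right] using h2
        have hyy : ⟪y, y⟫ = 0 := by
          nth_rewrite 1 [hydef]
          rw [sum_inner]
          apply Finset.sum_eq_zero
          intro a _
          rw [real_inner_smul_left, hby a, mul_zero]
        have hy0 : y = 0 := inner_self_eq_zero.mp hyy
        have hz := Fintype.linearIndependent_iff.mp hli x (by rw [← hydef]; exact hy0)
        funext a
        exact hz a
      have hdetR : Nr.det ≠ 0 := by
        intro hdet
        obtain ⟨x, hx0, hx⟩ := (Matrix.exists_mulVec_eq_zero_iff).mpr hdet
        exact hx0 (hker x hx)
      have hdetQ : Nq.det ≠ 0 := by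
        intro h
        apply hdetR
        show (Nq.map Rat.cast).det = 0
        have hmapeq : (Nq.map Rat.cast) = (Rat.castHom ℝ).mapMatrix Nq := rfl
        rw [hmapeq, ← RingHom.map_det (Rat.castHom ℝ) Nq, h, map_zero]
      set xq : {y // y ∈ t.erase a₀} → ℚ := Nq⁻¹.mulVec dq with hxqdef
      have hxqsol : Nq.mulVec xq = dq := by
        rw [hxqdef, Matrix.mulVec_mulVec, Matrix.mul_nonsing_inv _ (Ne.isUnit hdetQ),
          Matrix.one_mulVec]
      have hcast : Nr.mulVec (fun a => ((xq a : ℝ))) = fun b => ((dq b : ℝ)) := by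
        funext b
        have hmv := RingHom.map_mulVec (Rat.castHom ℝ) Nq xq b
        rw [show ((Rat.castHom ℝ) ((Nq.mulVec xq) b)) = ((dq b : ℝ)) by rw [hxqsol]; rfl] at hmv
        rw [hmv]
        rfl
      have hxseq : ∀ a : {y // y ∈ t.erase a₀}, xs a = ((xq a : ℝ)) := by
        have hdiff : Nr.mulVec (fun a => xs a - ((xq a : ℝ))) = 0 := by
          have : (fun a => xs a - ((xq a : ℝ))) = xs - (fun a => ((xq a : ℝ))) := rfl
          rw [this, Matrix.mulVec_sub]
          funext b
          rw [Pi.sub_apply, hrow b]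
          rw [show Nr.mulVec (fun a => ((xq a : ℝ))) b = ((dq b : ℝ)) from congrFun hcast b]
          simp
        have hzero := hker _ hdiff
        intro a
        have := congrFun hzero a
        simpa [sub_eq_zero] using this
      have hxqpos : ∀ a : {y // y ∈ t.erase a₀}, 0 < xq a := by
        intro a
        have h1 : 0 < xs a := div_pos (hc _ (Finset.mem_of_mem_erase a.2)) hc₀
        rw [hxseq a] at h1
        exact_mod_cast h1
      -- common denominator
      set q : ℕ := (Finset.univ : Finset {y // y ∈ t.erase a₀}).lcm
        (fun a => (xq a).den) with hqdef
      have hq0 : 0 < q := by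
        rw [hqdef]
        apply Nat.pos_of_ne_zero
        intro h
        rw [Finset.lcm_eq_zero_iff] at h
        obtain ⟨a, _, ha⟩ := h
        exact (xq a).den_nz ha
      have hmval : ∀ a : {y // y ∈ t.erase a₀}, ∃ m : ℕ, 0 < m ∧ ((m : ℚ)) = xq a * q := by
        intro a
        have hdvd : (xq a).den ∣ q := Finset.dvd_lcm (Finset.mem_univ a)
        obtain ⟨k, hk⟩ := hdvd
        have hk0 : 0 < k := by
          rcases Nat.eq_zero_or_pos k with h | h
          · rw [h, Nat.mul_zero] at hk; omega
          · exact h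
        have hnum : 0 < (xq a).num := Rat.num_pos.mpr (hxqpos a)
        refine ⟨(xq a).num.toNat * k, Nat.mul_pos (by omega) hk0, ?_⟩
        have h1 : ((xq a) * ((xq a).den : ℚ)) = ((xq a).num : ℚ) := Rat.mul_den_eq_num _
        have h2 : (((xq a).num.toNat : ℕ) : ℚ) = ((xq a).num : ℚ) := by
          exact_mod_cast Int.toNat_of_nonneg hnum.le
        push_cast
        rw [hk]
        push_cast
        rw [h2, ← h1]
        ring
      choose m hm0 hmq using hmval
      -- the real relation
      have hrelscaled : (q : ℝ) • a₀ + ∑ a : {y // y ∈ t.erase a₀}, (m a : ℝ) • (a : V) = 0 := by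
        have hrel' : c a₀ • a₀ + ∑ a : {y // y ∈ t.erase a₀}, c (a:V) • (a:V) = 0 := by
          have hx := Finset.add_sum_erase t (fun a => c a • a) ha₀
          rw [hrel] at hx
          beta_reduce at hx
          rw [Finset.sum_coe_sort (t.erase a₀) (fun a => c a • a)]
          exact hx
        have hmr : ∀ a : {y // y ∈ t.erase a₀}, (m a : ℝ) = (q : ℝ) * xs a := by
          intro a
          have h2 : ((m a : ℚ) : ℝ) = ((xq a * q : ℚ) : ℝ) := by rw [hmq a]
          push_cast at h2
          rw [hxseq a, h2]
          ring
        have hfac : (q : ℝ) • a₀ + ∑ a : {y // y ∈ t.erase a₀}, (m a : ℝ) • (a : V)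
            = ((q : ℝ) / c a₀) • (c a₀ • a₀ + ∑ a : {y // y ∈ t.erase a₀}, c (a:V) • (a:V)) := by
          rw [smul_add, Finset.smul_sum]
          congr 1
          · rw [smul_smul, div_mul_cancel₀ _ (ne_of_gt hc₀)]
          · apply Finset.sum_congr rfl
            intro a _
            rw [smul_smul, hmr a]
            congr 1
            show (q:ℝ) * (c (a:V) / c a₀) = (q:ℝ) / c a₀ * c (a:V)
            ring
        rw [hfac, hrel', smul_zero]
      -- build the multiset
      set MM : Multiset V :=
        Multiset.replicate q a₀ + (Finset.univ : Finset {y // y ∈ t.erase a₀}).sum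
          (fun a => Multiset.replicate (m a) ((a : V))) with hMMdef
      have hsummul : ∀ s : Finset {y // y ∈ t.erase a₀},
          ((s.sum fun a => Multiset.replicate (m a) ((a:V))).sum : V)
            = s.sum (fun a => (m a) • ((a:V))) := by
        intro s
        induction s using Finset.induction_on with
        | empty => simp
        | insert a s hns ih2 =>
          rw [Finset.sum_insert hns, Finset.sum_insert hns, Multiset.sum_add,
            Multiset.sum_replicate, ih2]
      have hMMsum : MM.sum = 0 := by
        rw [hMMdef, Multiset.sum_add, Multiset.sum_replicate, hsummul]
        have h1 : ∀ (k : ℕ) (v : V), k • v = (k : ℝ) • v := fun k v =>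
          (Nat.cast_smul_eq_nsmul ℝ k v).symm
        rw [h1, Finset.sum_congr rfl (fun a _ => h1 (m a) _)]
        exact hrelscaled
      have hMMne : MM ≠ 0 := by
        rw [hMMdef]
        intro h
        have hcards := congrArg Multiset.card h
        rw [Multiset.card_add, Multiset.card_replicate] at hcards
        simp at hcards
        omega
      have hMMmem : ∀ a ∈ MM, a ∈ S := by
        intro x hx
        rw [hMMdef, Multiset.mem_add] at hx
        rcases hx with h | h
        · rw [(Multiset.eq_of_mem_replicate h : x = a₀)]
          exact ha₀S
        · rw [Multiset.mem_sum] at h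
          obtain ⟨a, _, ha⟩ := h
          rw [(Multiset.eq_of_mem_replicate ha : x = (a:V))]
          exact htS (Finset.mem_of_mem_erase a.2)
      exact no_zero_sum_multiset hΦ hS hcl MM.card MM le_rfl hMMmem hMMne hMMsum
    · -- linearly dependent case: reduce the support
      obtain ⟨g, hgsum, i₀, hgi₀⟩ := Fintype.not_linearIndependent_iff.mp hli
      obtain ⟨g₁, hg₁sum, hg₁pos⟩ :
          ∃ g₁ : {x // x ∈ t.erase a₀} → ℝ, (∑ a, g₁ a • (a:V)) = 0 ∧ ∃ a, 0 < g₁ a := by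
        rcases lt_trichotomy (g i₀) 0 with h | h | h
        · refine ⟨-g, ?_, ⟨i₀, by simpa using h⟩⟩
          have hneg : (∑ a, (-g) a • (a:V)) = -∑ a, g a • (a:V) := by
            rw [← Finset.sum_neg_distrib]
            apply Finset.sum_congr rfl
            intro a _
            simp [neg_smul]
          rw [hneg, hgsum, neg_zero]
        · exact absurd h hgi₀
        · exact ⟨g, hgsum, ⟨i₀, h⟩⟩
      set P := (Finset.univ : Finset {x // x ∈ t.erase a₀}).filter (fun a => 0 < g₁ a)
        with hPdef
      have hPne : P.Nonempty := by
        obtain ⟨a, ha⟩ := hg₁pos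
        exact ⟨a, by simp [hPdef, ha]⟩
      obtain ⟨astar, hastarP, hastar⟩ :=
        P.exists_min_image (fun a => c (a:V) / g₁ a) hPne
      have hgstar : 0 < g₁ astar := (Finset.mem_filter.mp hastarP).2
      have hcstar : 0 < c (astar : V) := hc _ (Finset.mem_of_mem_erase astar.2)
      set τ : ℝ := c (astar:V) / g₁ astar with hτdef
      have hτ0 : 0 < τ := div_pos hcstar hgstar
      set gh : V → ℝ := fun v => if hv : v ∈ t.erase a₀ then g₁ ⟨v, hv⟩ else 0 with hghdef
      set e : V → ℝ := fun v => c v - τ * gh v with hedef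
      have hgh₀ : gh a₀ = 0 := by
        rw [hghdef]
        exact dif_neg (Finset.notMem_erase a₀ t)
      have hgsum' : ∑ a ∈ t.erase a₀, gh a • a = 0 := by
        rw [← hg₁sum, ← Finset.sum_coe_sort (t.erase a₀) (fun a => gh a • a)]
        apply Finset.sum_congr rfl
        intro a _
        congr 1
        rw [hghdef]
        simp [a.2]
      have hesum : ∑ a ∈ t, e a • a = 0 := by
        have h1 : ∑ a ∈ t, e a • a = (∑ a ∈ t, c a • a) - τ • (∑ a ∈ t, gh a • a) := by
          rw [Finset.smul_sum, ← Finset.sum_sub_distrib]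
          apply Finset.sum_congr rfl
          intro a _
          rw [hedef]
          simp only [sub_smul, smul_smul]
        have h2 : ∑ a ∈ t, gh a • a = ∑ a ∈ t.erase a₀, gh a • a := by
          have hx := Finset.add_sum_erase t (fun a => gh a • a) ha₀
          beta_reduce at hx
          rw [hgh₀, zero_smul, zero_add] at hx
          exact hx.symm
        rw [h1, h2, hgsum', hrel, smul_zero, sub_zero]
      have hepos : ∀ a ∈ t, 0 ≤ e a := by
        intro a ha
        have hea : e a = c a - τ * gh a := rfl
        by_cases hat' : a ∈ t.erase a₀
        · have hga : gh a = g₁ ⟨a, hat'⟩ := dif_pos hat'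
          rw [hea, hga]
          by_cases hg : 0 < g₁ ⟨a, hat'⟩
          · have hmin := hastar ⟨a, hat'⟩ (by simp [hPdef, hg])
            have hle : τ * g₁ ⟨a, hat'⟩ ≤ c a := (le_div_iff₀ hg).mp hmin
            linarith
          · push_neg at hg
            have hnn : 0 ≤ τ * (- g₁ ⟨a, hat'⟩) := mul_nonneg hτ0.le (by linarith)
            have hca := hc a ha
            nlinarith
        · have hgh0 : gh a = 0 := dif_neg hat'
          rw [hea, hgh0, mul_zero, sub_zero]
          exact (hc a ha).le
      have hestar : e (astar : V) = 0 := by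
        have hea : e (astar : V) = c (astar : V) - τ * gh (astar : V) := rfl
        have hga : gh (astar : V) = g₁ astar := dif_pos astar.2
        rw [hea, hga, hτdef]
        field_simp
        ring
      have ht''sub : t.filter (fun a => 0 < e a) ⊆ t := Finset.filter_subset _ _
      have hstar_t : (astar : V) ∈ t := Finset.mem_of_mem_erase astar.2
      have hstar_not : (astar : V) ∉ t.filter (fun a => 0 < e a) := by
        simp [hestar]
      have ht''lt : (t.filter (fun a => 0 < e a)).card < t.card :=
        Finset.card_lt_card ((Finset.ssubset_iff_of_subset ht''sub).mpr
          ⟨_, hstar_t, hstar_not⟩)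
      have ha₀t'' : a₀ ∈ t.filter (fun a => 0 < e a) := by
        apply Finset.mem_filter.mpr
        refine ⟨ha₀, ?_⟩
        have hea : e a₀ = c a₀ - τ * gh a₀ := rfl
        rw [hea, hgh₀, mul_zero, sub_zero]
        exact hc a₀ ha₀
      have hesum'' : ∑ a ∈ t.filter (fun a => 0 < e a), e a • a = 0 := by
        rw [Finset.sum_filter_of_ne, hesum]
        intro x hx hne'
        rcases (hepos x hx).lt_or_eq with h | h
        · exact h
        · exact absurd (by rw [← h, zero_smul]) hne'
      exact ih (t.filter (fun a => 0 < e a)) (by omega) ⟨a₀, ha₀t''⟩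
        (fun x hx => htS (ht''sub hx)) e
        (fun a ha => (Finset.mem_filter.mp ha).2) hesum''

/-- A pair-closed subset of roots lies in an open half-space. -/
lemma halfspace {Φ S : Set V} (hΦ : IsRootSystem Φ) (hS : S ⊆ Φ)
    (hcl : ∀ a ∈ S, ∀ b ∈ S, ⟪a, b⟫ < 0 → a + b ∈ S) :
    ∃ v : V, ∀ a ∈ S, 0 < ⟪v, a⟫ := by
  have hSfin : S.Finite := hΦ.finite.subset hS
  have h0 : (0:V) ∉ convexHull ℝ S := by
    intro h0
    rw [← hSfin.coe_toFinset, Finset.convexHull_eq] at h0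
    obtain ⟨w, hw0, hw1, hwc⟩ := h0
    have hcm : ∑ y ∈ hSfin.toFinset, w y • y = 0 := by
      have hcc := Finset.centerMass_eq_of_sum_1 hSfin.toFinset id hw1
      rw [hwc] at hcc
      simpa using hcc.symm
    have hTsum : ∑ a ∈ hSfin.toFinset.filter (fun a => 0 < w a), w a • a = 0 := by
      rw [Finset.sum_filter_of_ne]
      · exact hcm
      · intro x hx hne
        rcases (hw0 x hx).lt_or_eq with h | h
        · exact h
        · exact absurd (by rw [← h, zero_smul]) hne
    have hTne : (hSfin.toFinset.filter (fun a => 0 < w a)).Nonempty := by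
      rw [Finset.filter_nonempty_iff]
      by_contra h
      push_neg at h
      have hzero : ∑ y ∈ hSfin.toFinset, w y = 0 := by
        apply Finset.sum_eq_zero
        intro x hx
        rcases (hw0 x hx).lt_or_eq with h' | h'
        · exact absurd h' (not_lt.mpr (h x hx))
        · exact h'.symm
      rw [hw1] at hzero
      exact one_ne_zero hzero
    refine no_pos_rel hΦ hS hcl _ _ le_rfl hTne ?_ w
      (fun a ha => (Finset.mem_filter.mp ha).2) hTsum
    intro x hx
    have := Finset.mem_of_mem_filter x hx
    rwa [hSfin.mem_toFinset] at this
  obtain ⟨f, u, hu0, hub⟩ := geometric_hahn_banach_point_closed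
    (convex_convexHull ℝ S) ((hSfin.isCompact_convexHull (𝕜 := ℝ)).isClosed) h0
  refine ⟨(InnerProductSpace.toDual ℝ V).symm f, fun a ha => ?_⟩
  rw [InnerProductSpace.toDual_symm_apply]
  have h1 := hub a (subset_convexHull ℝ S ha)
  have h2 : f 0 = 0 := map_zero f
  rw [h2] at hu0
  linarith

/-- There is a vector pairing nontrivially with every nonzero element of a finite set. -/
lemma exists_reg_aux : ∀ (n : ℕ) (A : Finset V), A.card ≤ n →
    ∃ z : V, ∀ α ∈ A, α ≠ 0 → ⟪z, α⟫ ≠ 0 := by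
  intro n
  induction n with
  | zero =>
    intro A hA
    have hAe : A = ∅ := Finset.card_eq_zero.mp (Nat.le_zero.mp hA)
    exact ⟨0, fun α h => absurd (hAe ▸ h) (Finset.notMem_empty α)⟩
  | succ n ih =>
    intro A hA
    by_cases hAe : A = ∅
    · exact ⟨0, fun α h => absurd (hAe ▸ h) (Finset.notMem_empty α)⟩
    obtain ⟨a, ha⟩ := Finset.nonempty_of_ne_empty hAe
    have hcard : (A.erase a).card ≤ n := by
      have h1 := Finset.card_erase_of_mem ha
      have h2 := Finset.card_pos.mpr (⟨a, ha⟩ : A.Nonempty)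
      omega
    obtain ⟨z, hz⟩ := ih (A.erase a) hcard
    by_cases ha0 : a = 0
    · refine ⟨z, fun α hα hα0 => ?_⟩
      by_cases hαa : α = a
      · exact absurd (hαa.trans ha0) hα0
      · exact hz α (Finset.mem_erase.mpr ⟨hαa, hα⟩) hα0
    · have hBad : (((fun α => -⟪z, α⟫ / ⟪a, α⟫) '' ↑A) ∪ {0}).Finite :=
        ((A.finite_toSet.image _).union (Set.finite_singleton 0))
      obtain ⟨t, ht⟩ := (Set.ne_univ_iff_exists_notMem _).mp
        (fun h => Set.infinite_univ (α := ℝ) (h ▸ hBad))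
      refine ⟨z + t • a, fun α hα hα0 => ?_⟩
      have hinner : ⟪z + t • a, α⟫ = ⟪z, α⟫ + t * ⟪a, α⟫ := by
        rw [inner_add_left, real_inner_smul_left]
      by_cases haα : ⟪a, α⟫ = 0
      · rw [hinner, haα, mul_zero, add_zero]
        by_cases hαa : α = a
        · rw [hαa] at haα
          exact absurd (inner_self_eq_zero.mp haα) ha0
        · exact hz α (Finset.mem_erase.mpr ⟨hαa, hα⟩) hα0
      · rw [hinner]
        intro hcontra
        have hteq : t = -⟪z, α⟫ / ⟪a, α⟫ := by
          rw [eq_div_iff haα]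
          linarith
        exact ht (Or.inl ⟨α, hα, hteq.symm⟩)

lemma exists_reg (A : Set V) (hA : A.Finite) : ∃ z : V, ∀ α ∈ A, α ≠ 0 → ⟪z, α⟫ ≠ 0 := by
  obtain ⟨z, hz⟩ := exists_reg_aux hA.toFinset.card hA.toFinset le_rfl
  exact ⟨z, fun α hα => hz α (hA.mem_toFinset.mpr hα)⟩

/-- Perturb a half-space vector to a regular one. -/
lemma perturb {Φ Ψ : Set V} (hΦfin : Φ.Finite) (hΨΦ : Ψ ⊆ Φ) (v₁ z : V)
    (h1 : ∀ ψ ∈ Ψ, 0 < ⟪v₁, ψ⟫) (hz : ∀ α ∈ Φ, ⟪z, α⟫ ≠ 0) :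
    ∃ v : V, (∀ ψ ∈ Ψ, 0 < ⟪v, ψ⟫) ∧ (∀ α ∈ Φ, ⟪v, α⟫ ≠ 0) := by
  set g : V → ℝ := fun α => if ⟪v₁, α⟫ = 0 then 1 else |⟪v₁, α⟫| / (|⟪z, α⟫| + 1) with hgdef
  have hEne : (insert (1:ℝ) (hΦfin.toFinset.image g)).Nonempty :=
    ⟨1, Finset.mem_insert_self _ _⟩
  set ε : ℝ := (insert (1:ℝ) (hΦfin.toFinset.image g)).min' hEne with hεdef
  have hallpos : ∀ x ∈ insert (1:ℝ) (hΦfin.toFinset.image g), 0 < x := by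
    intro x hx
    rcases Finset.mem_insert.mp hx with h | h
    · rw [h]; norm_num
    · obtain ⟨α, hα, rfl⟩ := Finset.mem_image.mp h
      by_cases h' : ⟪v₁, α⟫ = 0
      · rw [hgdef]; simp only [h', if_pos]; norm_num
      · have hga : g α = |⟪v₁, α⟫| / (|⟪z, α⟫| + 1) := if_neg h'
        rw [hga]
        have := abs_pos.mpr h'
        have := abs_nonneg ⟪z, α⟫
        positivity
  have hεPos : 0 < ε := hallpos _ (Finset.min'_mem _ hEne)
  have hεle : ∀ α ∈ Φ, ε ≤ g α := fun α hα =>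
    Finset.min'_le _ _ (Finset.mem_insert_of_mem
      (Finset.mem_image_of_mem g (hΦfin.mem_toFinset.mpr hα)))
  have hkey : ∀ α ∈ Φ, ⟪v₁, α⟫ ≠ 0 → ε * |⟪z, α⟫| < |⟪v₁, α⟫| := by
    intro α hα hne
    have hg : g α = |⟪v₁, α⟫| / (|⟪z, α⟫| + 1) := if_neg hne
    have hle : ε ≤ |⟪v₁, α⟫| / (|⟪z, α⟫| + 1) := hg ▸ hεle α hα
    have h2 : 0 < |⟪v₁, α⟫| := abs_pos.mpr hne
    have h3 : (0:ℝ) ≤ |⟪z, α⟫| := abs_nonneg _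
    have h4 : (0:ℝ) < |⟪z, α⟫| + 1 := by linarith
    have h5 : |⟪v₁, α⟫| / (|⟪z, α⟫| + 1) * |⟪z, α⟫| < |⟪v₁, α⟫| := by
      rw [div_mul_eq_mul_div, div_lt_iff₀ h4]
      nlinarith
    have h6 := mul_le_mul_of_nonneg_right hle h3
    linarith
  refine ⟨v₁ + ε • z, ?_, ?_⟩
  · intro ψ hψ
    have hp := h1 ψ hψ
    have hb := hkey ψ (hΨΦ hψ) (ne_of_gt hp)
    rw [inner_add_left, real_inner_smul_left]
    have h7 : -(ε * |⟪z, ψ⟫|) ≤ ε * ⟪z, ψ⟫ := by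
      have h8 := neg_abs_le (⟪z, ψ⟫ : ℝ)
      nlinarith [hεPos.le]
    have habs : |⟪v₁, ψ⟫| = ⟪v₁, ψ⟫ := abs_of_pos hp
    rw [habs] at hb
    linarith
  · intro α hα
    rw [inner_add_left, real_inner_smul_left]
    by_cases h : ⟪v₁, α⟫ = 0
    · rw [h, zero_add]
      exact mul_ne_zero (ne_of_gt hεPos) (hz α hα)
    · intro hcontra
      have hb := hkey α hα h
      have h9 : ⟪v₁, α⟫ = -(ε * ⟪z, α⟫) := by linarith
      have h6 : |⟪v₁, α⟫| = ε * |⟪z, α⟫| := by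
        rw [h9, abs_neg, abs_mul, abs_of_pos hεPos]
      linarith

/-- Weyl group elements permute the roots. -/
lemma weyl_maps {Φ : Set V} (hΦ : IsRootSystem Φ) :
    ∀ w ∈ weylGroup Φ, (∀ α ∈ Φ, w α ∈ Φ) ∧ (∀ α ∈ Φ, w⁻¹ α ∈ Φ) := by
  intro w hw
  refine Subgroup.closure_induction (fun x hx => ?_) ?_
    (fun x y hx hy ihx ihy => ?_) (fun x hx ihx => ?_) hw
  · obtain ⟨α, hα, rfl⟩ := hx
    have hself : ∀ β ∈ Φ, sRefl α β ∈ Φ := by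
      intro β hβ
      rw [sRefl_apply]
      exact hΦ.reflect_mem α hα β hβ
    refine ⟨hself, fun β hβ => ?_⟩
    rw [show ((sRefl α)⁻¹ : V ≃ₗᵢ[ℝ] V) β = (sRefl α).symm β from rfl, sRefl_symm]
    exact hself β hβ
  · constructor <;> intro β hβ <;> simpa using hβ
  · constructor
    · intro β hβ
      rw [show (x * y) β = x (y β) from rfl]
      exact ihx.1 _ (ihy.1 β hβ)
    · intro β hβ
      rw [mul_inv_rev]
      rw [show (y⁻¹ * x⁻¹) β = y⁻¹ (x⁻¹ β) from rfl]
      exact ihy.2 _ (ihx.2 β hβ)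
  · refine ⟨ihx.2, ?_⟩
    rw [inv_inv]
    exact ihx.1

/-- Weyl group elements preserve the span of the roots. -/
lemma weyl_span {Φ : Set V} (hΦ : IsRootSystem Φ) {w : V ≃ₗᵢ[ℝ] V} (hw : w ∈ weylGroup Φ) :
    ∀ x ∈ Submodule.span ℝ Φ, w x ∈ Submodule.span ℝ Φ := by
  intro x hx
  induction hx using Submodule.span_induction with
  | mem y hy => exact Submodule.subset_span ((weyl_maps hΦ w hw).1 y hy)
  | zero => rw [map_zero]; exact Submodule.zero_mem _
  | add y z hy hz ihy ihz => rw [map_add]; exact Submodule.add_mem _ ihy ihz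
  | smul r y hy ihy => rw [map_smul]; exact Submodule.smul_mem _ r ihy

/-- The Weyl orbit of a vector in the span of the roots is finite. -/
lemma orbit_finite {Φ : Set V} (hΦ : IsRootSystem Φ) (u₀ : V)
    (hu₀ : u₀ ∈ Submodule.span ℝ Φ) :
    {x : V | ∃ w ∈ weylGroup Φ, x = w u₀}.Finite := by
  classical
  set J : Set ℝ := ((fun α => ⟪u₀, α⟫) '' Φ) ∪ {0} with hJdef
  have hJfin : J.Finite := (hΦ.finite.image _).union (Set.finite_singleton 0)
  set F : V → ({y // y ∈ hΦ.finite.toFinset} → ℝ) := fun x α => ⟪x, (α : V)⟫ with hFdef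
  have himg : F '' {x : V | ∃ w ∈ weylGroup Φ, x = w u₀}
      ⊆ Set.pi Set.univ (fun _ : {y // y ∈ hΦ.finite.toFinset} => J) := by
    rintro f ⟨x, ⟨w, hw, rfl⟩, rfl⟩
    intro α _
    show ⟪w u₀, (α : V)⟫ ∈ J
    have hαΦ : (α : V) ∈ Φ := hΦ.finite.mem_toFinset.mp α.2
    have hwα : w⁻¹ (α : V) ∈ Φ := (weyl_maps hΦ w hw).2 _ hαΦ
    have heq : ⟪w u₀, (α : V)⟫ = ⟪u₀, w⁻¹ (α : V)⟫ := by
      conv_lhs => rw [show ((α : V)) = w (w⁻¹ (α : V)) by simp]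
      exact w.inner_map_map u₀ (w⁻¹ (α : V))
    rw [heq]
    exact Or.inl ⟨_, hwα, rfl⟩
  have hinj : Set.InjOn F {x : V | ∃ w ∈ weylGroup Φ, x = w u₀} := by
    rintro x ⟨w1, hw1, rfl⟩ y ⟨w2, hw2, rfl⟩ hxy
    set x := w1 u₀
    set y := w2 u₀
    have hxK : x ∈ Submodule.span ℝ Φ := weyl_span hΦ hw1 u₀ hu₀
    have hyK : y ∈ Submodule.span ℝ Φ := weyl_span hΦ hw2 u₀ hu₀
    have hsub : x - y ∈ Submodule.span ℝ Φ := Submodule.sub_mem _ hxK hyK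
    have hclaim : ∀ u ∈ Submodule.span ℝ Φ, ⟪x - y, u⟫ = 0 := by
      intro u hu
      induction hu using Submodule.span_induction with
      | mem γ hγ =>
        have h1 : ⟪x, γ⟫ = ⟪y, γ⟫ :=
          congrFun hxy ⟨γ, hΦ.finite.mem_toFinset.mpr hγ⟩
        rw [inner_sub_left, h1, sub_self]
      | zero => rw [inner_zero_right]
      | add a b ha hb iha ihb => rw [inner_add_right, iha, ihb, add_zero]
      | smul r a ha iha => rw [real_inner_smul_right, iha, mul_zero]
    have h2 : ⟪x - y, x - y⟫ = 0 := hclaim _ hsub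
    have := inner_self_eq_zero.mp h2
    exact sub_eq_zero.mp this
  exact Set.Finite.of_finite_image
    ((Set.Finite.pi (fun _ => hJfin)).subset himg) hinj

/-- a radical closed subset of a root system is contained in some
Weyl-group translate of the positive roots. -/
theorem stmt0 (Φ Φp : Set V) (hΦ : IsRootSystem Φ) (hpos : IsPositiveSystem Φ Φp)
    (Ψ : Set V) (hΨ : Ψ ⊆ Φ)
    (hclosed : ∀ α ∈ Ψ, ∀ β ∈ Ψ, α + β ∈ Φ → α + β ∈ Ψ)
    (hradical : Ψ ∩ (-Ψ) = ∅) :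
    ∃ w ∈ weylGroup Φ, Ψ ⊆ ⇑w '' Φp := by
  classical
  have hrad : ∀ a ∈ Ψ, -a ∉ Ψ := by
    intro a ha hna
    have : a ∈ Ψ ∩ (-Ψ) := ⟨ha, Set.mem_neg.mpr hna⟩
    rw [hradical] at this
    exact this
  have hclΨ : ∀ a ∈ Ψ, ∀ b ∈ Ψ, ⟪a, b⟫ < 0 → a + b ∈ Ψ := by
    intro a ha b hb hn
    have hbne : b ≠ -a := fun h => hrad a ha (h ▸ hb)
    exact hclosed a ha b hb (root_add hΦ (hΨ ha) (hΨ hb) hbne hn)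
  obtain ⟨v₁, hv₁⟩ := halfspace hΦ hΨ hclΨ
  have hradP : ∀ a ∈ Φp, -a ∉ Φp := fun a ha => (hpos.neg_xor a (hpos.subset ha)).mp ha
  have hclP : ∀ a ∈ Φp, ∀ b ∈ Φp, ⟪a, b⟫ < 0 → a + b ∈ Φp := by
    intro a ha b hb hn
    have hbne : b ≠ -a := fun h => hradP a ha (h ▸ hb)
    exact hpos.add_mem a ha b hb (root_add hΦ (hpos.subset ha) (hpos.subset hb) hbne hn)
  obtain ⟨u, hu⟩ := halfspace hΦ hpos.subset hclP
  obtain ⟨z, hz⟩ := exists_reg Φ hΦ.finite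
  have hz' : ∀ α ∈ Φ, ⟪z, α⟫ ≠ 0 := fun α hα => hz α hα (hΦ.ne_zero α hα)
  obtain ⟨v, hvΨ, hvreg⟩ := perturb hΦ.finite hΨ v₁ z hv₁ hz'
  -- project u to the span of the roots
  set K := Submodule.span ℝ (Φ : Set V) with hKdef
  set u₀ : V := (Submodule.orthogonalProjection K u : V) with hu₀def
  have hu₀K : u₀ ∈ K := (Submodule.orthogonalProjection K u).2
  have hu₀pair : ∀ α ∈ Φp, 0 < ⟪α, u₀⟫ := by
    intro α hα
    have hαK : α ∈ K := Submodule.subset_span (hpos.subset hα)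
    have hperp : u - u₀ ∈ Kᗮ := K.sub_starProjection_mem_orthogonal u
    have h0 : ⟪α, u - u₀⟫ = 0 := (Submodule.mem_orthogonal K (u - u₀)).mp hperp α hαK
    rw [inner_sub_right] at h0
    have h1 : ⟪α, u⟫ = ⟪u, α⟫ := real_inner_comm u α
    have := hu α hα
    have h2 : ⟪α, u₀⟫ = ⟪α, u⟫ := by linarith
    rw [h2, h1]
    exact this
  -- maximize over the finite Weyl orbit
  have hOfin := orbit_finite hΦ u₀ hu₀K
  have hOne : {x : V | ∃ w ∈ weylGroup Φ, x = w u₀}.Nonempty :=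
    ⟨u₀, 1, one_mem _, by simp⟩
  obtain ⟨x, hxO, hmax⟩ :=
    Set.exists_max_image {x : V | ∃ w ∈ weylGroup Φ, x = w u₀} (fun x => ⟪v, x⟫) hOfin hOne
  obtain ⟨w, hwW, rfl⟩ := hxO
  refine ⟨w, hwW, ?_⟩
  have hkey : ∀ α ∈ Φp, 0 < ⟪v, w α⟫ := by
    intro α hα
    have hαΦ := hpos.subset hα
    have hα0 := hΦ.ne_zero α hαΦ
    have hαα : (0:ℝ) < ⟪α, α⟫ := inner_self_pos' hα0
    have hc : 0 < 2 * ⟪α, u₀⟫ / ⟪α, α⟫ := by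
      have := hu₀pair α hα
      positivity
    have hsα : sRefl α ∈ weylGroup Φ := Subgroup.subset_closure ⟨α, hαΦ, rfl⟩
    have hsw : w * sRefl α ∈ weylGroup Φ := mul_mem hwW hsα
    have hle := hmax ((w * sRefl α) u₀) ⟨w * sRefl α, hsw, rfl⟩
    have hexp : (w * sRefl α) u₀ = w u₀ - (2 * ⟪α, u₀⟫ / ⟪α, α⟫) • (w α) := by
      rw [show ((w * sRefl α) u₀) = w (sRefl α u₀) from rfl, sRefl_apply, map_sub, map_smul]
    rw [hexp] at hle
    simp only [inner_sub_right, real_inner_smul_right] at hle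
    have hge : 0 ≤ ⟪v, w α⟫ := by nlinarith
    have hne : ⟪v, w α⟫ ≠ 0 := hvreg _ ((weyl_maps hΦ w hwW).1 α hαΦ)
    exact lt_of_le_of_ne hge (Ne.symm hne)
  intro ψ hψ
  have hψΦ := hΨ hψ
  have hsymmψ : w⁻¹ ψ ∈ Φ := (weyl_maps hΦ w hwW).2 ψ hψΦ
  have happ : w ((w⁻¹ : V ≃ₗᵢ[ℝ] V) ψ) = ψ := by simp
  by_cases hmem : (w⁻¹ : V ≃ₗᵢ[ℝ] V) ψ ∈ Φp
  · exact ⟨(w⁻¹ : V ≃ₗᵢ[ℝ] V) ψ, hmem, happ⟩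
  · exfalso
    have hx := hpos.neg_xor (-((w⁻¹ : V ≃ₗᵢ[ℝ] V) ψ)) (root_neg hΦ hsymmψ)
    rw [neg_neg] at hx
    have hneg : -((w⁻¹ : V ≃ₗᵢ[ℝ] V) ψ) ∈ Φp := hx.mpr hmem
    have h1 := hkey _ hneg
    rw [map_neg, happ, inner_neg_right] at h1
    have h2 := hvΨ ψ hψ
    linarith
end
end

section
/- In a reduced root system Φ with simple roots Δ, every fundamental coweight is a positive rational linear combination of the simple coroots; equivalently, every entry of the inverse of the Cartan matrix of an irreducible root system is positive. -/
open scoped RealInnerProductSpace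
noncomputable section

attribute [local instance] Classical.propDecidable

variable {V : Type*} [NormedAddCommGroup V] [InnerProductSpace ℝ V] [FiniteDimensional ℝ V]

set_option linter.unusedSectionVars false
set_option maxHeartbeats 1000000

lemma list_sum_natCombo {n : ℕ} {α : Fin n → V} (l : List V) (h : ∀ β ∈ l, β ∈ Set.range α) :
    ∃ m : Fin n → ℕ, l.sum = ∑ k, (m k : ℝ) • α k := by
  induction l with
  | nil => exact ⟨0, by simp⟩
  | cons a t ih =>
    obtain ⟨m, hm⟩ := ih (fun β hβ => h β (List.mem_cons_of_mem _ hβ))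
    obtain ⟨k, hk⟩ := h a List.mem_cons_self
    refine ⟨fun j => (if j = k then 1 else 0) + m j, ?_⟩
    have h1 : ∑ j, (((if j = k then 1 else 0) + m j : ℕ) : ℝ) • α j
        = ∑ j, ((if j = k then (1:ℝ) else 0) • α j + (m j : ℝ) • α j) := by
      refine Finset.sum_congr rfl fun j _ => ?_
      push_cast
      rw [add_smul]
    have h2 : ∑ j, (if j = k then (1:ℝ) else 0) • α j = α k := by
      rw [Finset.sum_congr rfl (fun j _ => by split <;> simp_all : ∀ j ∈ Finset.univ,
        (if j = k then (1:ℝ) else 0) • α j = if j = k then α k else 0)]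
      simp
    rw [List.sum_cons, hm, h1, Finset.sum_add_distrib, h2, hk]

section Main
variable {n : ℕ} {Φ Φp : Set V} {α : Fin n → V}

lemma pos_natCombo (hbase : IsBase Φ Φp (Set.range α)) {β : V} (hβ : β ∈ Φp) :
    ∃ m : Fin n → ℕ, β = ∑ k, (m k : ℝ) • α k := by
  obtain ⟨l, -, hl, hsum, -⟩ := hbase.gen β hβ
  obtain ⟨m, hm⟩ := list_sum_natCombo l hl
  exact ⟨m, by rw [← hsum, hm]⟩

lemma root_sign (hpos : IsPositiveSystem Φ Φp) (hbase : IsBase Φ Φp (Set.range α))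
    {γ : V} (hγ : γ ∈ Φ) :
    ∃ m : Fin n → ℕ, γ = ∑ k, (m k : ℝ) • α k ∨ γ = -∑ k, (m k : ℝ) • α k := by
  by_cases h : γ ∈ Φp
  · obtain ⟨m, hm⟩ := pos_natCombo hbase h
    exact ⟨m, Or.inl hm⟩
  · have hneg : -γ ∈ Φp := by
      by_contra hc
      exact h ((hpos.neg_xor γ hγ).2 hc)
    obtain ⟨m, hm⟩ := pos_natCombo hbase hneg
    exact ⟨m, Or.inr (by rw [← hm, neg_neg])⟩

end Main
section Main2
variable {n : ℕ} {Φ Φp : Set V} {α : Fin n → V}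

lemma basis_repr_combo (e : Module.Basis (Fin n) ℝ V) (he : ∀ j, e j = α j) (c : Fin n → ℝ) (j : Fin n) :
    e.repr (∑ k, c k • α k) j = c j := by
  have h : ∑ k, c k • α k = ∑ k, c k • e k := by simp [he]
  rw [h, Module.Basis.repr_sum_self]

lemma orth_span {s t : Set V} (h : ∀ a ∈ s, ∀ b ∈ t, ⟪a, b⟫ = 0) :
    ∀ a ∈ Submodule.span ℝ s, ∀ b ∈ Submodule.span ℝ t, ⟪a, b⟫ = 0 := by
  intro a ha
  induction ha using Submodule.span_induction with
  | mem x hx =>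
    intro b hb
    induction hb using Submodule.span_induction with
    | mem y hy => exact h x hx y hy
    | zero => exact inner_zero_right x
    | add y z _ _ hy hz => rw [inner_add_right, hy, hz, add_zero]
    | smul r y _ hy => rw [real_inner_smul_right, hy, mul_zero]
  | zero => intro b hb; exact inner_zero_left b
  | add x y _ _ hx hy => intro b hb; rw [inner_add_left, hx b hb, hy b hb, add_zero]
  | smul r x _ hx => intro b hb; rw [real_inner_smul_left, hx b hb, mul_zero]

end Main2
section Main3
variable {n : ℕ} {Φ Φp : Set V} {α : Fin n → V}

lemma alpha_mem_Phi (hpos : IsPositiveSystem Φ Φp) (hbase : IsBase Φ Φp (Set.range α))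
    (k : Fin n) : α k ∈ Φ :=
  hpos.subset (hbase.subset ⟨k, rfl⟩)

lemma alpha_inner_pos (hΦ : IsRootSystem Φ) (hpos : IsPositiveSystem Φ Φp)
    (hbase : IsBase Φ Φp (Set.range α)) (k : Fin n) : 0 < ⟪α k, α k⟫ := by
  rw [real_inner_self_eq_norm_sq]
  exact pow_pos (norm_pos_iff.mpr (hΦ.ne_zero _ (alpha_mem_Phi hpos hbase k))) 2

lemma cross_contra (hΦ : IsRootSystem Φ) (hpos : IsPositiveSystem Φ Φp)
    (hbase : IsBase Φ Φp (Set.range α))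
    (e : Module.Basis (Fin n) ℝ V) (he : ∀ j, e j = α j)
    {β : V} {m : Fin n → ℕ} (hβm : β = ∑ k, (m k : ℝ) • α k) (hβ : β ∈ Φp)
    {k : Fin n} (hk0 : m k = 0)
    (horthk : ∀ j, m j ≠ 0 → ⟪α k, α j⟫ = 0) (hsum : β + α k ∈ Φp) : False := by
  have hkk : 0 < ⟪α k, α k⟫ := alpha_inner_pos hΦ hpos hbase k
  have hkβ : ⟪α k, β⟫ = 0 := by
    rw [hβm, inner_sum]
    refine Finset.sum_eq_zero fun j _ => ?_
    rw [real_inner_smul_right]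
    by_cases hj : m j = 0
    · rw [hj]; simp
    · rw [horthk j hj, mul_zero]
  have hγΦ : β + α k ∈ Φ := hpos.subset hsum
  have href := hΦ.reflect_mem (α k) (alpha_mem_Phi hpos hbase k) _ hγΦ
  have hratio : 2 * ⟪α k, β + α k⟫ / ⟪α k, α k⟫ = 2 := by
    rw [inner_add_right, hkβ, zero_add]
    field_simp
  rw [hratio] at href
  have hδ : β + α k - (2:ℝ) • α k = β - α k := by
    rw [two_smul]; abel
  rw [hδ] at href
  obtain ⟨p, hp⟩ := root_sign hpos hbase href
  have hreprβ : ∀ j, e.repr β j = (m j : ℝ) := fun j => by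
    rw [hβm]; exact basis_repr_combo e he _ j
  have hreprα : ∀ j i, e.repr (α j) i = if i = j then 1 else 0 := fun j i => by
    rw [← he j, e.repr_self]
    simp [Finsupp.single_apply, eq_comm]
  rcases hp with hp | hp
  · have := basis_repr_combo e he (fun j => (p j : ℝ)) k
    rw [← hp, map_sub, Finsupp.sub_apply, hreprβ, hreprα, hk0] at this
    simp at this
    linarith [Nat.cast_nonneg (α := ℝ) (p k), this]
  · -- β - α k = -∑ p
    have hβne : β ≠ 0 := hΦ.ne_zero β (hpos.subset hβ)
    have hex : ∃ j, m j ≠ 0 := by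
      by_contra hc
      push_neg at hc
      exact hβne (by rw [hβm]; exact Finset.sum_eq_zero fun j _ => by rw [hc j]; simp)
    obtain ⟨j0, hj0⟩ := hex
    have hj0k : j0 ≠ k := fun h => hj0 (h ▸ hk0)
    have h1 : e.repr (β - α k) j0 = (m j0 : ℝ) := by
      rw [map_sub, Finsupp.sub_apply, hreprβ, hreprα]
      simp [hj0k]
    have h2 : e.repr (β - α k) j0 = -(p j0 : ℝ) := by
      rw [hp, map_neg, Finsupp.neg_apply, basis_repr_combo e he]
    rw [h2] at h1
    have : (0:ℝ) < m j0 := by positivity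
    nlinarith [Nat.cast_nonneg (α := ℝ) (p j0)]

lemma obtuse (hΦ : IsRootSystem Φ) (hpos : IsPositiveSystem Φ Φp)
    (hbase : IsBase Φ Φp (Set.range α))
    (e : Module.Basis (Fin n) ℝ V) (he : ∀ j, e j = α j)
    {i j : Fin n} (hij : i ≠ j) : ⟪α i, α j⟫ ≤ 0 := by
  by_contra hc
  push_neg at hc
  have hii : 0 < ⟪α i, α i⟫ := alpha_inner_pos hΦ hpos hbase i
  set r : ℝ := 2 * ⟪α i, α j⟫ / ⟪α i, α i⟫ with hr
  have hrpos : 0 < r := by positivity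
  have href := hΦ.reflect_mem (α i) (alpha_mem_Phi hpos hbase i)
    (α j) (alpha_mem_Phi hpos hbase j)
  obtain ⟨p, hp⟩ := root_sign hpos hbase href
  have hreprα : ∀ a b : Fin n, e.repr (α a) b = if b = a then 1 else 0 := fun a b => by
    rw [← he a, e.repr_self]
    simp [Finsupp.single_apply, eq_comm]
  rcases hp with hp | hp
  · have := basis_repr_combo e he (fun k => (p k : ℝ)) i
    rw [← hp, map_sub, Finsupp.sub_apply, map_smul, Finsupp.smul_apply, hreprα, hreprα] at this
    rw [if_neg hij] at this
    norm_num at this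
    linarith [Nat.cast_nonneg (α := ℝ) (p i), this, hrpos,
      (show r = 2 * ⟪α i, α j⟫ / ‖α i‖ ^ 2 by rw [hr, real_inner_self_eq_norm_sq])]
  · have := basis_repr_combo e he (fun k => (p k : ℝ)) j
    rw [← neg_eq_iff_eq_neg.2 hp] at this
    rw [map_neg, Finsupp.neg_apply, map_sub, Finsupp.sub_apply, map_smul, Finsupp.smul_apply,
      hreprα, hreprα] at this
    rw [if_neg hij.symm] at this
    norm_num at this
    linarith [Nat.cast_nonneg (α := ℝ) (p j), this]

end Main3
section Main4
variable {n : ℕ} {Φ Φp : Set V} {α : Fin n → V}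

lemma single_combo (k : Fin n) :
    α k = ∑ j, (((if j = k then 1 else 0 : ℕ) : ℝ)) • α j := by
  have h2 : ∑ j, (((if j = k then 1 else 0 : ℕ) : ℝ)) • α j
      = ∑ j, (if j = k then α k else 0) := by
    refine Finset.sum_congr rfl fun j _ => ?_
    split <;> simp_all
  rw [h2, Finset.sum_ite_eq' Finset.univ k (fun _ => α k)]
  simp

lemma purity (hΦ : IsRootSystem Φ) (hpos : IsPositiveSystem Φ Φp)
    (hbase : IsBase Φ Φp (Set.range α))
    (e : Module.Basis (Fin n) ℝ V) (he : ∀ j, e j = α j)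
    (Q : Set (Fin n)) (horth : ∀ k j, k ∈ Q → j ∉ Q → ⟪α k, α j⟫ = 0)
    {β : V} (hβ : β ∈ Φp) :
    ∃ m : Fin n → ℕ, β = ∑ k, (m k : ℝ) • α k ∧
      ((∀ k, m k ≠ 0 → k ∈ Q) ∨ (∀ k, m k ≠ 0 → k ∉ Q)) := by
  obtain ⟨l, hne, hmem, hsum, hpartial⟩ := hbase.gen β hβ
  have key : ∀ N, N < l.length → ∃ m : Fin n → ℕ,
      (l.take (N + 1)).sum = ∑ k, (m k : ℝ) • α k ∧
      ((∀ k, m k ≠ 0 → k ∈ Q) ∨ (∀ k, m k ≠ 0 → k ∉ Q)) := by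
    intro N
    induction N with
    | zero =>
      intro h0
      obtain ⟨k, hk⟩ := hmem l[0] (l.getElem_mem h0)
      refine ⟨fun j => if j = k then 1 else 0, ?_, ?_⟩
      · rw [List.sum_take_succ l 0 h0]
        simp [← single_combo, ← hk]
      · by_cases hkQ : k ∈ Q
        · left; intro j hj; rcases (by simpa using hj : j = k) with rfl; exact hkQ
        · right; intro j hj; rcases (by simpa using hj : j = k) with rfl; exact hkQ
    | succ N ih =>
      intro hlt
      have hN : N < l.length := Nat.lt_of_succ_lt hlt
      obtain ⟨m, hm, hpure⟩ := ih hN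
      have hσ : (l.take (N + 1)).sum ∈ Φp := hpartial N hN
      have hσ' : (l.take (N + 2)).sum ∈ Φp := hpartial (N + 1) hlt
      have hstep : (l.take (N + 2)).sum = (l.take (N + 1)).sum + l[N + 1] :=
        List.sum_take_succ l (N + 1) hlt
      obtain ⟨k, hk⟩ := hmem l[N + 1] (l.getElem_mem hlt)
      -- same side helper
      have hsame : (l.take (N + 2)).sum = ∑ j, ((m j + if j = k then 1 else 0 : ℕ) : ℝ) • α j := by
        rw [hstep, hm, ← hk, single_combo (α := α) k]
        rw [← Finset.sum_add_distrib]
        refine Finset.sum_congr rfl fun j _ => ?_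
        push_cast
        rw [add_smul]
      rcases hpure with hside | hside
      · by_cases hkQ : k ∈ Q
        · refine ⟨fun j => m j + if j = k then 1 else 0, hsame, Or.inl ?_⟩
          intro j hj
          by_cases hjk : j = k
          · exact hjk ▸ hkQ
          · exact hside j (by simpa [hjk] using hj)
        · -- cross: contradiction
          exfalso
          have hk0 : m k = 0 := by
            by_contra hc
            exact hkQ (hside k hc)
          refine cross_contra hΦ hpos hbase e he hm hσ hk0 (fun j hj => ?_) ?_
          · rw [real_inner_comm]
            exact horth j k (hside j hj) hkQ
          · rw [hk, ← hstep]; exact hσ'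
      · by_cases hkQ : k ∈ Q
        · exfalso
          have hk0 : m k = 0 := by
            by_contra hc
            exact (hside k hc) hkQ
          refine cross_contra hΦ hpos hbase e he hm hσ hk0 (fun j hj => ?_) ?_
          · exact horth k j hkQ (hside j hj)
          · rw [hk, ← hstep]; exact hσ'
        · refine ⟨fun j => m j + if j = k then 1 else 0, hsame, Or.inr ?_⟩
          intro j hj
          by_cases hjk : j = k
          · exact hjk ▸ hkQ
          · exact hside j (by simpa [hjk] using hj)
  have hlen : l.length - 1 < l.length := by
    have : 0 < l.length := List.length_pos_iff.mpr hne
    omega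
  obtain ⟨m, hm, hpure⟩ := key (l.length - 1) hlen
  refine ⟨m, ?_, hpure⟩
  have : l.length - 1 + 1 = l.length := by omega
  rw [← hsum, ← List.take_length (l := l), ← this, hm]

lemma not_orth_partition (hΦ : IsRootSystem Φ) (hpos : IsPositiveSystem Φ Φp)
    (hbase : IsBase Φ Φp (Set.range α))
    (e : Module.Basis (Fin n) ℝ V) (he : ∀ j, e j = α j)
    (hirr : RootIsIrreducible Φ)
    (Q : Set (Fin n)) (hQ1 : Q.Nonempty) (hQ2 : Qᶜ.Nonempty)
    (horth : ∀ k j, k ∈ Q → j ∉ Q → ⟪α k, α j⟫ = 0) : False := by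
  set s : Set V := {v | v ∈ Φ ∧ v ∈ Submodule.span ℝ (α '' Q)} with hs
  set t : Set V := {v | v ∈ Φ ∧ v ∈ Submodule.span ℝ (α '' Qᶜ)} with ht
  have combo_mem : ∀ (R : Set (Fin n)) (m : Fin n → ℕ), (∀ k, m k ≠ 0 → k ∈ R) →
      (∑ k, (m k : ℝ) • α k) ∈ Submodule.span ℝ (α '' R) := by
    intro R m hmR
    refine Submodule.sum_mem _ fun k _ => ?_
    by_cases hk : m k = 0
    · rw [hk]; simp
    · exact Submodule.smul_mem _ _ (Submodule.subset_span ⟨k, hmR k hk, rfl⟩)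
  have hunion : Φ = s ∪ t := by
    apply Set.eq_of_subset_of_subset
    · intro v hv
      have hv' : v ∈ Φp ∨ -v ∈ Φp := by
        by_cases h : v ∈ Φp
        · exact Or.inl h
        · exact Or.inr (by by_contra hc; exact h ((hpos.neg_xor v hv).2 hc))
      rcases hv' with h | h
      · obtain ⟨m, hm, hpure⟩ := purity hΦ hpos hbase e he Q horth h
        rcases hpure with hp | hp
        · exact Or.inl ⟨hv, hm ▸ combo_mem Q m hp⟩
        · exact Or.inr ⟨hv, hm ▸ combo_mem Qᶜ m hp⟩
      · obtain ⟨m, hm, hpure⟩ := purity hΦ hpos hbase e he Q horth h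
        have hv2 : v = -∑ k, (m k : ℝ) • α k := by rw [← hm, neg_neg]
        rcases hpure with hp | hp
        · exact Or.inl ⟨hv, hv2 ▸ Submodule.neg_mem _ (combo_mem Q m hp)⟩
        · exact Or.inr ⟨hv, hv2 ▸ Submodule.neg_mem _ (combo_mem Qᶜ m hp)⟩
    · intro v hv
      rcases hv with h | h <;> exact h.1
  have horth' : ∀ a ∈ s, ∀ b ∈ t, ⟪a, b⟫ = 0 := by
    intro a ha b hb
    refine orth_span (s := α '' Q) (t := α '' Qᶜ) ?_ a ha.2 b hb.2
    rintro x ⟨kx, hkx, rfl⟩ y ⟨ky, hky, rfl⟩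
    exact horth kx ky hkx hky
  rcases hirr.2 s t hunion horth' with h | h
  · obtain ⟨k, hk⟩ := hQ1
    have : α k ∈ s := ⟨alpha_mem_Phi hpos hbase k, Submodule.subset_span ⟨k, hk, rfl⟩⟩
    rw [h] at this
    exact this
  · obtain ⟨k, hk⟩ := hQ2
    have : α k ∈ t := ⟨alpha_mem_Phi hpos hbase k, Submodule.subset_span ⟨k, hk, rfl⟩⟩
    rw [h] at this
    exact this

end Main4
/-- every fundamental coweight of an irreducible root system is a positive
rational combination of the simple coroots; equivalently all entries of the inverse of the
Cartan matrix are positive. -/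
theorem stmt2 (n : ℕ) (Φ Φp : Set V) (α : Fin n → V)
    (hΦ : IsRootSystem Φ) (hpos : IsPositiveSystem Φ Φp)
    (hbase : IsBase Φ Φp (Set.range α)) (hind : LinearIndependent ℝ α)
    (hspan : Submodule.span ℝ (Set.range α) = ⊤)
    (hirr : RootIsIrreducible Φ)
    (ϖ : Fin n → V) (hϖ : ∀ i j, ⟪ϖ i, α j⟫ = if i = j then 1 else 0) :
    (∀ i, ∃ c : Fin n → ℚ, (∀ j, 0 < c j) ∧ ϖ i = ∑ j, (c j : ℝ) • coro (α j)) ∧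
    (∀ i j, 0 < ((Matrix.of fun i j => ⟪coro (α i), α j⟫ : Matrix (Fin n) (Fin n) ℝ))⁻¹ i j) := by
  classical
  have hspan' : ⊤ ≤ Submodule.span ℝ (Set.range α) := hspan.ge
  let e : Module.Basis (Fin n) ℝ V := Module.Basis.mk hind hspan'
  have he : ∀ j, e j = α j := fun j => by
    simp only [e, Module.Basis.coe_mk]
  set A : Matrix (Fin n) (Fin n) ℝ := Matrix.of fun i j => ⟪coro (α i), α j⟫ with hA
  have hself : ∀ k, 0 < ⟪α k, α k⟫ := alpha_inner_pos hΦ hpos hbase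
  have hAentry : ∀ i j, A i j = 2 * ⟪α i, α j⟫ / ⟪α i, α i⟫ := by
    intro i j
    show ⟪coro (α i), α j⟫ = _
    rw [coro, real_inner_smul_left]
    ring
  have hAdiag : ∀ i, A i i = 2 := fun i => by
    rw [hAentry, mul_div_assoc, div_self (hself i).ne', mul_one]
  have hAoff : ∀ i j, i ≠ j → A i j ≤ 0 := by
    intro i j hij
    rw [hAentry]
    have h1 := obtuse hΦ hpos hbase e he hij
    exact div_nonpos_iff.mpr (Or.inr ⟨by linarith, (hself i).le⟩)
  set B : Matrix (Fin n) (Fin n) ℝ :=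
    Matrix.of fun i j => e.repr (ϖ i) j * (⟪α j, α j⟫ / 2) with hB
  have hϖrep : ∀ i, ϖ i = ∑ j, B i j • coro (α j) := by
    intro i
    conv_lhs => rw [← e.sum_repr (ϖ i)]
    refine Finset.sum_congr rfl fun j _ => ?_
    rw [he j, coro, smul_smul]
    show e.repr (ϖ i) j • α j = (e.repr (ϖ i) j * (⟪α j, α j⟫ / 2) * (2 / ⟪α j, α j⟫)) • α j
    congr 1
    have := (hself j).ne'
    field_simp
  have hBA : B * A = 1 := by
    ext i k
    rw [Matrix.mul_apply]
    have hstep : ∑ j, B i j * A j k = ⟪ϖ i, α k⟫ := by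
      rw [hϖrep i, sum_inner]
      refine Finset.sum_congr rfl fun j _ => ?_
      rw [real_inner_smul_left]
      rfl
    rw [hstep, hϖ, Matrix.one_apply]
  have hAinv : A⁻¹ = B := Matrix.inv_eq_left_inv hBA
  -- positivity of B
  have hBpos : ∀ i j, 0 < B i j := by
    intro i
    set b : Fin n → ℝ := fun j => B i j with hb
    set cy : Fin n → ℝ := fun j => if b j < 0 then -b j else 0 with hcy
    set cx : Fin n → ℝ := fun j => if b j < 0 then 0 else b j with hcx
    have hcynn : ∀ j, 0 ≤ cy j := by
      intro j; rw [hcy]; dsimp only; split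
      next h => linarith
      next h => exact le_rfl
    have hcxnn : ∀ j, 0 ≤ cx j := by
      intro j; rw [hcx]; dsimp only; split
      next h => exact le_rfl
      next h => exact not_lt.mp h
    set y : V := ∑ j, cy j • coro (α j) with hy
    set x : V := ∑ j, cx j • coro (α j) with hx
    have hxy : x - y = ϖ i := by
      rw [hx, hy, ← Finset.sum_sub_distrib, hϖrep i]
      refine Finset.sum_congr rfl fun j _ => ?_
      rw [← sub_smul]
      congr 1
      rw [hcx, hcy]; dsimp only; split <;> ring
    have hϖcoro : ∀ j, ⟪ϖ i, coro (α j)⟫ = if i = j then 2 / ⟪α j, α j⟫ else 0 := by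
      intro j
      rw [coro, real_inner_smul_right, hϖ]
      split <;> simp
    have h1 : 0 ≤ ⟪ϖ i, y⟫ := by
      rw [hy, inner_sum]
      refine Finset.sum_nonneg fun j _ => ?_
      rw [real_inner_smul_right, hϖcoro]
      refine mul_nonneg (hcynn j) ?_
      split
      · exact (div_pos two_pos (hself j)).le
      · exact le_rfl
    have hcoro2 : ∀ j k, j ≠ k → ⟪coro (α j), coro (α k)⟫ ≤ 0 := by
      intro j k hjk
      rw [coro, coro, real_inner_smul_left, real_inner_smul_right]
      have h2 := obtuse hΦ hpos hbase e he hjk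
      have h3 := hself j
      have h4 := hself k
      have h5 : 0 ≤ 2 / ⟪α j, α j⟫ := by positivity
      have h6 : 0 ≤ 2 / ⟪α k, α k⟫ := by positivity
      exact mul_nonpos_of_nonneg_of_nonpos h5 (mul_nonpos_of_nonneg_of_nonpos h6 h2)
    have h2 : ⟪x, y⟫ ≤ 0 := by
      rw [hx, sum_inner]
      refine Finset.sum_nonpos fun j _ => ?_
      rw [real_inner_smul_left, hy, inner_sum]
      rw [Finset.mul_sum]
      refine Finset.sum_nonpos fun k _ => ?_
      rw [real_inner_smul_right]
      by_cases hjk : j = k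
      · subst hjk
        have : cx j * cy j = 0 := by
          rw [hcx, hcy]; dsimp only; split <;> ring
        rw [← mul_assoc, this, zero_mul]
      · exact mul_nonpos_of_nonneg_of_nonpos (hcxnn j)
          (mul_nonpos_of_nonneg_of_nonpos (hcynn k) (hcoro2 j k hjk))
    have h3 : ⟪ϖ i, y⟫ = ⟪x, y⟫ - ⟪y, y⟫ := by
      rw [← hxy, inner_sub_left]
    have hyy : ⟪y, y⟫ ≤ 0 := by linarith
    have hy0 : y = 0 := real_inner_self_nonpos.mp hyy
    have hbnn : ∀ j, 0 ≤ b j := by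
      intro j
      by_contra hc
      push_neg at hc
      have hy' : ∑ j, (cy j * (2 / ⟪α j, α j⟫)) • α j = 0 := by
        rw [← hy0, hy]
        refine Finset.sum_congr rfl fun k _ => ?_
        rw [coro, smul_smul]
      have := linearIndependent_iff'.mp hind Finset.univ _ hy' j (Finset.mem_univ j)
      have hcyj : cy j = -b j := by rw [hcy]; dsimp only; rw [if_pos hc]
      rw [hcyj] at this
      have h7 : 0 < 2 / ⟪α j, α j⟫ := div_pos two_pos (hself j)
      have h8 : 0 < -b j := by linarith
      nlinarith
    -- strict positivity
    intro j
    rcases lt_or_eq_of_le (hbnn j) with h | h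
    · exact h
    exfalso
    have hZ : ∀ j', b j' = 0 → i ≠ j' ∧ ∀ k, b k ≠ 0 → ⟪α k, α j'⟫ = 0 := by
      intro j' hj'
      have hsum : ∑ k, b k * A k j' = (1 : Matrix (Fin n) (Fin n) ℝ) i j' := by
        rw [← hBA, Matrix.mul_apply]
      have hterm : ∀ k, b k * A k j' ≤ 0 := by
        intro k
        by_cases hkj : k = j'
        · subst hkj; rw [hj', zero_mul]
        · exact mul_nonpos_of_nonneg_of_nonpos (hbnn k) (hAoff k j' hkj)
      have hij' : i ≠ j' := by
        intro hij'
        subst hij'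
        rw [Matrix.one_apply_eq] at hsum
        have := Finset.sum_nonpos (fun k _ => hterm k) (s := Finset.univ)
        rw [hsum] at this
        linarith
      rw [Matrix.one_apply_ne hij'] at hsum
      have heach := (Finset.sum_eq_zero_iff_of_nonpos (fun k _ => hterm k)).mp hsum
      refine ⟨hij', fun k hk => ?_⟩
      have h9 := heach k (Finset.mem_univ k)
      have hAkj : A k j' = 0 := by
        rcases mul_eq_zero.mp h9 with h | h
        · exact absurd h hk
        · exact h
      rw [hAentry] at hAkj
      rcases div_eq_zero_iff.mp hAkj with h | h
      · linarith
      · exact absurd h (hself k).ne'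
    have hiQ : b i ≠ 0 := by
      intro hc
      exact (hZ i hc).1 rfl
    refine not_orth_partition hΦ hpos hbase e he hirr {k | b k ≠ 0} ⟨i, hiQ⟩
      ⟨j, by simp [← h]⟩ ?_
    intro k j' hk hj'
    have hj'0 : b j' = 0 := not_not.mp hj'
    exact (hZ j' hj'0).2 k hk
  -- rationality
  have hrat : ∀ i j, ∃ q : ℚ, (q : ℝ) = A i j := by
    intro i j
    obtain ⟨z, hz⟩ := hΦ.crystallographic (α i) (alpha_mem_Phi hpos hbase i)
      (α j) (alpha_mem_Phi hpos hbase j)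
    refine ⟨(z : ℚ), ?_⟩
    rw [hAentry, hz]
    norm_cast
  choose q hq using hrat
  set NQ : Matrix (Fin n) (Fin n) ℚ := Matrix.of q with hNQ
  have hNQmap : NQ.map ((Rat.castHom ℝ) : ℚ → ℝ) = A := by
    ext i j
    exact hq i j
  have hAdet : A.det ≠ 0 := by
    intro hc
    have := congrArg Matrix.det hBA
    rw [Matrix.det_mul, hc, mul_zero, Matrix.det_one] at this
    exact zero_ne_one this
  have hdet : NQ.det ≠ 0 := by
    intro hc
    apply hAdet
    rw [← hNQmap, ← RingHom.mapMatrix_apply, ← RingHom.map_det, hc]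
    simp
  have hNQinvA : (NQ⁻¹).map ((Rat.castHom ℝ) : ℚ → ℝ) * A = 1 := by
    rw [← hNQmap, ← Matrix.map_mul, Matrix.nonsing_inv_mul NQ (isUnit_iff_ne_zero.mpr hdet)]
    simp
  have hBrat : B = (NQ⁻¹).map ((Rat.castHom ℝ) : ℚ → ℝ) := by
    have h2 : A * B = 1 := mul_eq_one_comm.mpr hBA
    have h3 : A * ((NQ⁻¹).map ((Rat.castHom ℝ) : ℚ → ℝ)) = 1 :=
      mul_eq_one_comm.mpr hNQinvA
    calc B = B * (A * ((NQ⁻¹).map ((Rat.castHom ℝ) : ℚ → ℝ))) := by rw [h3, mul_one]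
    _ = (B * A) * ((NQ⁻¹).map ((Rat.castHom ℝ) : ℚ → ℝ)) := by rw [mul_assoc]
    _ = (NQ⁻¹).map ((Rat.castHom ℝ) : ℚ → ℝ) := by rw [hBA, one_mul]
  constructor
  · intro i
    refine ⟨fun j => NQ⁻¹ i j, fun j => ?_, ?_⟩
    · have hb := hBpos i j
      rw [hBrat, Matrix.map_apply] at hb
      rw [show ((Rat.castHom ℝ) (NQ⁻¹ i j) : ℝ) = ((NQ⁻¹ i j : ℚ) : ℝ) from rfl] at hb
      exact_mod_cast hb
    · rw [hϖrep i]
      refine Finset.sum_congr rfl fun j _ => ?_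
      congr 1
      rw [hBrat]
      rfl
  · intro i j
    rw [hAinv]
    exact hBpos i j
end
end

section
/- Let x = t^μ w lie in the dominant Weyl chamber, α a positive root, and v ∈ W₀. If vt^μw lies in the critical strip C_{vα} (equivalently ⟨α, μ⟩ + δ_{w⁻¹α} − δ_{vα} = 0), then vα is a positive root, and either (⟨α, μ⟩ = 0 and w⁻¹α > 0) or (⟨α, μ⟩ = 1 and w⁻¹α < 0). -/
open scoped RealInnerProductSpace
noncomputable section

attribute [local instance] Classical.propDecidable

variable {V : Type*} [NormedAddCommGroup V] [InnerProductSpace ℝ V] [FiniteDimensional ℝ V]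

/-- if `vt^μw` lies in the critical strip `C_{vα}` (i.e.
`⟨α,μ⟩ + δ_{w⁻¹α} - δ_{vα} = 0`) with `α` positive and `t^μ w` in the dominant chamber, then
`vα > 0` and either `⟨α,μ⟩ = 0, w⁻¹α > 0` or `⟨α,μ⟩ = 1, w⁻¹α < 0`. -/
theorem stmt9 (Φ Φp : Set V) (hΦ : IsRootSystem Φ) (hpos : IsPositiveSystem Φ Φp)
    (μ : V) (v w : V ≃ₗᵢ[ℝ] V) (hv : v ∈ weylGroup Φ) (hw : w ∈ weylGroup Φ)
    (hdom : ∀ β ∈ Φp, 0 ≤ ⟪β, μ⟫)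
    (hint : ∀ γ ∈ Φ, ∃ n : ℤ, ⟪γ, μ⟫ = (n : ℝ))
    (hdomalcove : ∀ β ∈ Φp, 0 ≤ kval Φp β μ w)
    (α : V) (hα : α ∈ Φp)
    (hstrip : ⟪α, μ⟫ + (if w.symm α ∈ Φp then (0 : ℝ) else -1)
      - (if v α ∈ Φp then (0 : ℝ) else -1) = 0) :
    v α ∈ Φp ∧
      ((⟪α, μ⟫ = 0 ∧ w.symm α ∈ Φp) ∨ (⟪α, μ⟫ = 1 ∧ w.symm α ∉ Φp)) := by
  have hge : 0 ≤ ⟪α, μ⟫ := hdom α hα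
  have hk := hdomalcove α hα
  unfold kval at hk
  by_cases h1 : w.symm α ∈ Φp <;> by_cases h2 : v α ∈ Φp <;>
    simp [h1, h2] at hstrip hk ⊢ <;> first
  | exact Or.inl hstrip
  | (exfalso; linarith)
  | linarith
end
end
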